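/- arXiv:2012.01627 — 4 statements merged into one kernel-verified Lean document; each statement's English description precedes it below -/
import Mathlib

section
/- The number of nilpotent r×r matrices over the finite field with q elements equals q^{r²−r}. -/
/-!
Every endomorphism `f` of an `n`-dimensional space `V` has the Fitting decomposition
`V = ker f^n ⊕ range f^n`, with `f` nilpotent on the first summand and invertible on the
second; conversely a complementary pair `(P, Q)`, a nilpotent endomorphism of `P` and an
automorphism of `Q` determine `f`. Counting endomorphisms by the dimension `j` of `ker f^n`,
and counting complementary pairs of dimensions `(j, n - j)` through adapted bases, gives
`q^(n²) / |GL_n| = ∑_{j ≤ n} ν_j / |GL_j|`, where `ν_j` is the number of nilpotent `j × j`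
matrices. Subtracting this identity for `n` from the one for `n + 1` and using
`|GL_{n+1}| = (q^(n+1) - 1) q^n |GL_n|` leaves `ν_{n+1} = q^((n+1)²) - (q^(n+1) - 1) q^n q^(n²)`,
which is `q^(n² + n)`.
-/

open Module Submodule LinearMap

theorem Nat.card_mul_eq_card_mul_of_card_fiber {α β : Type*} [Finite α] [Finite β]
    (r : α → β → Prop) {m n : ℕ} (hm : ∀ a, Nat.card {b // r a b} = m)
    (hn : ∀ b, Nat.card {a // r a b} = n) : Nat.card α * m = Nat.card β * n := by
  have := Fintype.ofFinite α
  have := Fintype.ofFinite β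
  calc Nat.card α * m = Nat.card {p : α × β // r p.1 p.2} := by
        simp [Nat.card_congr (Equiv.subtypeProdEquivSigmaSubtype r), Nat.card_sigma, hm]
    _ = Nat.card {p : β × α // r p.2 p.1} :=
        Nat.card_congr ((Equiv.prodComm α β).subtypeEquiv fun _ => Iff.rfl)
    _ = Nat.card β * n := by
        simp [Nat.card_congr (Equiv.subtypeProdEquivSigmaSubtype fun b a => r a b),
          Nat.card_sigma, hn]

namespace Module.End

variable {R M : Type*} [Semiring R] [AddCommMonoid M] [Module R M]
variable {f : Module.End R M} {m : ℕ} {P : Submodule R M}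

theorem apply_mem_of_ker_pow_eq (hker : ker (f ^ m) = P) : ∀ x ∈ P, f x ∈ P := by
  subst hker
  intro x hx
  rw [mem_ker] at hx ⊢
  rw [← mul_apply, pow_mul_comm', mul_apply, hx, map_zero]

theorem apply_mem_of_range_pow_eq (hrange : range (f ^ m) = P) : ∀ x ∈ P, f x ∈ P := by
  subst hrange
  rintro _ ⟨y, rfl⟩
  exact ⟨f y, by rw [← mul_apply, pow_mul_comm', mul_apply]⟩

theorem isNilpotent_restrict_of_ker_pow_eq (hker : ker (f ^ m) = P) (hP : ∀ x ∈ P, f x ∈ P) :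
    IsNilpotent (f.restrict hP) := by
  refine ⟨m, LinearMap.ext fun x => Subtype.ext ?_⟩
  rw [pow_restrict, LinearMap.coe_restrict_apply, LinearMap.zero_apply, ZeroMemClass.coe_zero,
    ← mem_ker, hker]
  exact x.2

end Module.End

theorem linearIndependent_sum_and_span_eq_iff {R M ι κ : Type*} [Ring R] [AddCommGroup M]
    [Module R M] {P Q : Submodule R M} (h : Disjoint P Q) {s : ι ⊕ κ → M} :
    (LinearIndependent R s ∧ span R (Set.range (s ∘ Sum.inl)) = P ∧
        span R (Set.range (s ∘ Sum.inr)) = Q) ↔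
      (LinearIndependent R (s ∘ Sum.inl) ∧ span R (Set.range (s ∘ Sum.inl)) = P) ∧
        (LinearIndependent R (s ∘ Sum.inr) ∧ span R (Set.range (s ∘ Sum.inr)) = Q) := by
  rw [linearIndependent_sum]
  constructor
  · rintro ⟨⟨hl, hr, -⟩, hP, hQ⟩
    exact ⟨⟨hl, hP⟩, hr, hQ⟩
  · rintro ⟨⟨hl, hP⟩, hr, hQ⟩
    exact ⟨⟨hl, hr, hP ▸ hQ ▸ h⟩, hP, hQ⟩

section Field

variable {F V : Type*} [Field F] [AddCommGroup V] [Module F V] {P Q : Submodule F V}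

noncomputable def Module.End.ofIsCompl (h : IsCompl P Q) :
    Module.End F P × Module.End F Q →ₐ[F] Module.End F V :=
  ((prodEquivOfIsCompl P Q h).conjAlgEquiv F).toAlgHom.comp (LinearMap.prodMapAlgHom F P Q)

namespace Module.End

theorem ofIsCompl_apply_left (h : IsCompl P Q) (g : Module.End F P × Module.End F Q) (x : P) :
    ofIsCompl h g x = g.1 x := by
  simp [ofIsCompl, LinearEquiv.conjAlgEquiv_apply]

theorem ofIsCompl_apply_right (h : IsCompl P Q) (g : Module.End F P × Module.End F Q) (x : Q) :
    ofIsCompl h g x = g.2 x := by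
  simp [ofIsCompl, LinearEquiv.conjAlgEquiv_apply]

theorem ofIsCompl_restrict (h : IsCompl P Q) {f : Module.End F V} (hP : ∀ x ∈ P, f x ∈ P)
    (hQ : ∀ x ∈ Q, f x ∈ Q) : ofIsCompl h (f.restrict hP, f.restrict hQ) = f := by
  refine LinearMap.ext fun x => ?_
  obtain ⟨x, rfl⟩ := (prodEquivOfIsCompl P Q h).surjective x
  simp [ofIsCompl_apply_left, ofIsCompl_apply_right]

theorem ker_ofIsCompl_zero (h : IsCompl P Q) {u : Module.End F Q} (hu : IsUnit u) :
    ker (ofIsCompl h (0, u)) = P := by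
  ext x
  obtain ⟨⟨a, b⟩, rfl⟩ := (prodEquivOfIsCompl P Q h).surjective x
  have hinj := ((Module.End.isUnit_iff u).mp hu).injective
  simp [ofIsCompl_apply_left, ofIsCompl_apply_right, map_eq_zero_iff u hinj,
    ← prodEquivOfIsCompl_symm_apply_snd_eq_zero (h := h)]

theorem range_ofIsCompl_zero (h : IsCompl P Q) {u : Module.End F Q} (hu : IsUnit u) :
    range (ofIsCompl h (0, u)) = Q := by
  refine le_antisymm ?_ fun y hy => ?_
  · rintro _ ⟨x, rfl⟩
    obtain ⟨⟨a, b⟩, rfl⟩ := (prodEquivOfIsCompl P Q h).surjective x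
    simp [ofIsCompl_apply_left, ofIsCompl_apply_right]
  · obtain ⟨z, hz⟩ := ((Module.End.isUnit_iff u).mp hu).surjective ⟨y, hy⟩
    exact ⟨z, by rw [ofIsCompl_apply_right, hz]⟩

end Module.End

variable [FiniteDimensional F V]

namespace Module.End

theorem isNilpotent_iff_pow_finrank_eq_zero {f : Module.End F V} :
    IsNilpotent f ↔ f ^ finrank F V = 0 := by
  refine ⟨fun hf => ?_, fun hf => ⟨_, hf⟩⟩
  simpa [hf.charpoly_eq_X_pow_finrank] using f.aeval_self_charpoly

theorem isCompl_ker_pow_finrank_range_pow_finrank (f : Module.End F V) :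
    IsCompl (ker (f ^ finrank F V)) (range (f ^ finrank F V)) := by
  obtain ⟨m, hm⟩ := Filter.eventually_atTop.mp f.eventually_isCompl_ker_pow_range_pow
  have hle : finrank F V ≤ max m (finrank F V) := le_max_right _ _
  have hker := ker_pow_eq_ker_pow_finrank_of_le (f := f) hle
  have hrange : range (f ^ max m (finrank F V)) = range (f ^ finrank F V) := by
    refine Submodule.eq_of_le_of_finrank_eq ?_ ?_
    · rw [← Nat.add_sub_cancel' hle, pow_add]
      exact LinearMap.range_comp_le_range _ _
    · have h1 := LinearMap.finrank_range_add_finrank_ker (f ^ max m (finrank F V))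
      have h2 := LinearMap.finrank_range_add_finrank_ker (f ^ finrank F V)
      rw [hker] at h1
      omega
  rw [← hker, ← hrange]
  exact hm _ (le_max_left _ _)

theorem ker_range_pow_finrank_ofIsCompl (h : IsCompl P Q) {g : Module.End F P × Module.End F Q}
    (hg : IsNilpotent g.1) (hu : IsUnit g.2) :
    ker (ofIsCompl h g ^ finrank F V) = P ∧ range (ofIsCompl h g ^ finrank F V) = Q := by
  have hpow : ofIsCompl h g ^ finrank F V = ofIsCompl h (0, g.2 ^ finrank F V) := by
    rw [← map_pow, Prod.pow_def, pow_eq_zero_of_le (Submodule.finrank_le P)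
      (isNilpotent_iff_pow_finrank_eq_zero.mp hg)]
  rw [hpow]
  exact ⟨ker_ofIsCompl_zero h (hu.pow _), range_ofIsCompl_zero h (hu.pow _)⟩

theorem isUnit_restrict_of_ker_pow_finrank_eq (h : IsCompl P Q) {f : Module.End F V}
    (hker : ker (f ^ finrank F V) = P) (hQ : ∀ x ∈ Q, f x ∈ Q) : IsUnit (f.restrict hQ) := by
  refine (LinearMap.isUnit_iff_ker_eq_bot _).mpr (eq_bot_iff.mpr fun x hx => ?_)
  have hxP : (x : V) ∈ P :=
    hker ▸ ker_pow_le_ker_pow_finrank f 1 (by simpa [Subtype.ext_iff] using hx)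
  exact (Submodule.mem_bot F).mpr (Subtype.ext (disjoint_def.mp h.disjoint _ hxP x.2))

noncomputable def fittingFiberEquiv (h : IsCompl P Q) :
    {f : Module.End F V // ker (f ^ finrank F V) = P ∧ range (f ^ finrank F V) = Q} ≃
      {g : Module.End F P // IsNilpotent g} × (Module.End F Q)ˣ where
  toFun f :=
    (⟨f.1.restrict (apply_mem_of_ker_pow_eq f.2.1), isNilpotent_restrict_of_ker_pow_eq f.2.1 _⟩,
      (isUnit_restrict_of_ker_pow_finrank_eq h f.2.1 (apply_mem_of_range_pow_eq f.2.2)).unit)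
  invFun g := ⟨ofIsCompl h (g.1.1, g.2), ker_range_pow_finrank_ofIsCompl h g.1.2 g.2.isUnit⟩
  left_inv f := Subtype.ext (ofIsCompl_restrict h (apply_mem_of_ker_pow_eq f.2.1)
    (apply_mem_of_range_pow_eq f.2.2))
  right_inv _ :=
    Prod.ext (Subtype.ext (LinearMap.ext fun x => Subtype.ext (ofIsCompl_apply_left h _ x)))
    (Units.ext (LinearMap.ext fun x => Subtype.ext (ofIsCompl_apply_right h _ x)))

end Module.End

theorem isCompl_span_inl_span_inr {ι κ : Type*} [Fintype ι] [Fintype κ]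
    (hcard : Fintype.card ι + Fintype.card κ = finrank F V) {s : ι ⊕ κ → V}
    (hs : LinearIndependent F s) :
    IsCompl (span F (Set.range (s ∘ Sum.inl))) (span F (Set.range (s ∘ Sum.inr))) := by
  refine ⟨(linearIndependent_sum.mp hs).2.2, codisjoint_iff.mpr ?_⟩
  rw [← span_union, ← Set.Sum.elim_range, Sum.elim_comp_inl_inr]
  exact hs.span_eq_top_of_card_eq_finrank' (by simp [hcard])

theorem card_isNilpotent_end {n : ℕ} (hV : finrank F V = n) :
    Nat.card {f : Module.End F V // IsNilpotent f} =
      Nat.card {M : Matrix (Fin n) (Fin n) F // M ^ n = 0} := by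
  let e := algEquivMatrix (finBasisOfFinrankEq F V hV)
  refine Nat.card_congr (e.toEquiv.subtypeEquiv fun f => ?_)
  rw [Module.End.isNilpotent_iff_pow_finrank_eq_zero, hV, ← map_eq_zero_iff e e.injective,
    map_pow]
  rfl

theorem card_units_end {n : ℕ} (hV : finrank F V = n) :
    Nat.card (Module.End F V)ˣ = Nat.card (GL (Fin n) F) :=
  Nat.card_congr
    (Units.mapEquiv (algEquivMatrix (finBasisOfFinrankEq F V hV)).toRingEquiv.toMulEquiv).toEquiv

theorem card_ker_range_pow_finrank_eq (h : IsCompl P Q) {j l : ℕ}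
    (hP : finrank F P = j) (hQ : finrank F Q = l) :
    Nat.card {f : Module.End F V // ker (f ^ finrank F V) = P ∧ range (f ^ finrank F V) = Q} =
      Nat.card {M : Matrix (Fin j) (Fin j) F // M ^ j = 0} * Nat.card (GL (Fin l) F) := by
  rw [Nat.card_congr (Module.End.fittingFiberEquiv h), Nat.card_prod, card_isNilpotent_end hP,
    card_units_end hQ]

end Field

section Counting

variable {F V : Type*} [Field F] [Fintype F] [AddCommGroup V] [Module F V] [FiniteDimensional F V]

theorem card_linearIndependent_eq_card_GL {ι : Type*} [Fintype ι] {n : ℕ}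
    (hι : Fintype.card ι = n) (hV : finrank F V = n) :
    Nat.card {s : ι → V // LinearIndependent F s} = Nat.card (GL (Fin n) F) := by
  have : Finite V := Module.finite_of_finite F
  let e := Fintype.equivFinOfCardEq hι
  have e' :
      {s : ι → V // LinearIndependent F s} ≃ {t : Fin n → V // LinearIndependent F t} :=
    (e.arrowCongr (Equiv.refl V)).subtypeEquiv fun s => (linearIndependent_equiv e.symm).symm
  rw [Nat.card_congr e', card_linearIndependent hV.ge, hV, Matrix.card_GL_field]

theorem card_linearIndependent_span_eq {P : Submodule F V} {n : ℕ} (hP : finrank F P = n) :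
    Nat.card {t : Fin n → V // LinearIndependent F t ∧ span F (Set.range t) = P} =
      Nat.card (GL (Fin n) F) := by
  let e : {t : Fin n → V // LinearIndependent F t ∧ span F (Set.range t) = P} ≃
      {t : Fin n → P // LinearIndependent F t} :=
    { toFun t := ⟨fun i => ⟨t.1 i, t.2.2.le (subset_span ⟨i, rfl⟩)⟩,
        LinearIndependent.of_comp P.subtype t.2.1⟩
      invFun t := ⟨P.subtype ∘ t.1, t.2.map' P.subtype (ker_subtype P), by
        rw [Set.range_comp, span_image, t.2.span_eq_top_of_card_eq_finrank' (by simp [hP]),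
          Submodule.map_top, range_subtype]⟩
      left_inv _ := rfl
      right_inv _ := rfl }
  rw [Nat.card_congr e, card_linearIndependent_eq_card_GL (Fintype.card_fin n) hP]

theorem card_linearIndependent_sum_span_eq {P Q : Submodule F V} (h : IsCompl P Q) {j l : ℕ}
    (hP : finrank F P = j) (hQ : finrank F Q = l) :
    Nat.card {s : Fin j ⊕ Fin l → V // LinearIndependent F s ∧
        span F (Set.range (s ∘ Sum.inl)) = P ∧ span F (Set.range (s ∘ Sum.inr)) = Q} =
      Nat.card (GL (Fin j) F) * Nat.card (GL (Fin l) F) := by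
  rw [← card_linearIndependent_span_eq hP, ← card_linearIndependent_span_eq hQ,
    ← Nat.card_prod]
  exact Nat.card_congr (((Equiv.sumArrowEquivProdArrow _ _ _).subtypeEquiv
    fun s => linearIndependent_sum_and_span_eq_iff h.disjoint).trans
      (Equiv.subtypeProdEquivProd))

theorem card_finrank_ker_pow_finrank_mul_card_GL {j l : ℕ} (hjl : j + l = finrank F V) :
    Nat.card {f : Module.End F V // finrank F (ker (f ^ finrank F V)) = j} *
        Nat.card (GL (Fin j) F) =
      Nat.card (GL (Fin (finrank F V)) F) *
        Nat.card {M : Matrix (Fin j) (Fin j) F // M ^ j = 0} := by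
  have : Finite V := Module.finite_of_finite F
  have : Finite (Module.End F V) := Module.finite_of_finite F
  -- double count pairs `(f, s)` with `s` a basis adapted to the Fitting decomposition of `f`
  let r (f : {f : Module.End F V // finrank F (ker (f ^ finrank F V)) = j})
      (s : {s : Fin j ⊕ Fin l → V // LinearIndependent F s}) : Prop :=
    ker (f.1 ^ finrank F V) = span F (Set.range (s.1 ∘ Sum.inl)) ∧
      range (f.1 ^ finrank F V) = span F (Set.range (s.1 ∘ Sum.inr))
  have hfib_f : ∀ f, Nat.card {s // r f s} =
      Nat.card (GL (Fin j) F) * Nat.card (GL (Fin l) F) := by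
    rintro ⟨f, hf⟩
    have hl : finrank F (range (f ^ finrank F V)) = l := by
      have := finrank_range_add_finrank_ker (f ^ finrank F V)
      omega
    rw [← card_linearIndependent_sum_span_eq
      (Module.End.isCompl_ker_pow_finrank_range_pow_finrank f) hf hl]
    exact Nat.card_congr ((Equiv.subtypeSubtypeEquivSubtypeInter
      (fun s : Fin j ⊕ Fin l → V => LinearIndependent F s)
      fun s => ker (f ^ finrank F V) = span F (Set.range (s ∘ Sum.inl)) ∧
        range (f ^ finrank F V) = span F (Set.range (s ∘ Sum.inr))).trans
      (Equiv.subtypeEquivRight fun s => and_congr_right fun _ => and_congr eq_comm eq_comm))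
  have hfib_s : ∀ s, Nat.card {f // r f s} =
      Nat.card {M : Matrix (Fin j) (Fin j) F // M ^ j = 0} * Nat.card (GL (Fin l) F) := by
    rintro ⟨s, hs⟩
    have hj : finrank F (span F (Set.range (s ∘ Sum.inl))) = j := by
      simp [finrank_span_eq_card (linearIndependent_sum.mp hs).1]
    have hl : finrank F (span F (Set.range (s ∘ Sum.inr))) = l := by
      simp [finrank_span_eq_card (linearIndependent_sum.mp hs).2.1]
    rw [← card_ker_range_pow_finrank_eq (isCompl_span_inl_span_inr (by simpa using hjl) hs) hj hl]
    exact Nat.card_congr ((Equiv.subtypeSubtypeEquivSubtypeInter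
      (fun f : Module.End F V => finrank F (ker (f ^ finrank F V)) = j)
      fun f => ker (f ^ finrank F V) = span F (Set.range (s ∘ Sum.inl)) ∧
        range (f ^ finrank F V) = span F (Set.range (s ∘ Sum.inr))).trans
      (Equiv.subtypeEquivRight fun f => ⟨And.right, fun h => ⟨h.1 ▸ hj, h⟩⟩))
  have key := Nat.card_mul_eq_card_mul_of_card_fiber r hfib_f hfib_s
  rw [card_linearIndependent_eq_card_GL (by simp [hjl]) rfl, ← mul_assoc, ← mul_assoc] at key
  exact Nat.eq_of_mul_eq_mul_right Nat.card_pos key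

theorem card_end_eq_sum_card_finrank_ker_pow_finrank :
    Nat.card (Module.End F V) = ∑ j ∈ Finset.range (finrank F V + 1),
      Nat.card {f : Module.End F V // finrank F (ker (f ^ finrank F V)) = j} := by
  classical
  have : Finite (Module.End F V) := Module.finite_of_finite F
  have := Fintype.ofFinite (Module.End F V)
  rw [Nat.card_eq_fintype_card, ← Finset.card_univ, Finset.card_eq_sum_card_fiberwise
    (t := Finset.range (finrank F V + 1)) (f := fun f => finrank F (ker (f ^ finrank F V)))
    fun f _ => by
      simpa [Nat.lt_succ_iff] using Submodule.finrank_le (ker (f ^ finrank F V))]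
  refine Finset.sum_congr rfl fun j _ => ?_
  rw [Nat.card_eq_fintype_card, Fintype.card_subtype]

end Counting

theorem Matrix.card_GL_fin_succ {F : Type*} [Field F] [Fintype F] (n : ℕ) :
    Nat.card (GL (Fin (n + 1)) F) =
      (Fintype.card F ^ (n + 1) - 1) * Fintype.card F ^ n * Nat.card (GL (Fin n) F) := by
  rw [Matrix.card_GL_field, Matrix.card_GL_field, Fin.prod_univ_succ, mul_assoc]
  congr 1
  calc ∏ i : Fin n, (Fintype.card F ^ (n + 1) - Fintype.card F ^ (i.succ : ℕ))
      = ∏ i : Fin n, Fintype.card F * (Fintype.card F ^ n - Fintype.card F ^ (i : ℕ)) := by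
        simp [pow_succ', Nat.mul_sub]
    _ = _ := by simp [Finset.prod_mul_distrib]

theorem sum_card_pow_eq_zero_div_card_GL (F : Type*) [Field F] [Fintype F] (n : ℕ) :
    ∑ j ∈ Finset.range (n + 1),
        (Nat.card {M : Matrix (Fin j) (Fin j) F // M ^ j = 0} : ℚ) / Nat.card (GL (Fin j) F) =
      (Fintype.card F : ℚ) ^ (n * n) / Nat.card (GL (Fin n) F) := by
  have hV : finrank F (Fin n → F) = n := Module.finrank_fin_fun F
  have hsum := card_end_eq_sum_card_finrank_ker_pow_finrank (F := F) (V := Fin n → F)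
  rw [Module.natCard_eq_pow_finrank (K := F), Module.finrank_linearMap, Nat.card_eq_fintype_card,
    hV] at hsum
  rw [eq_div_iff (by exact_mod_cast Nat.card_pos.ne'), Finset.sum_mul, ← Nat.cast_pow, hsum,
    Nat.cast_sum]
  refine Finset.sum_congr rfl fun j hj => ?_
  have hmul := card_finrank_ker_pow_finrank_mul_card_GL (F := F) (V := Fin n → F) (j := j)
    (l := n - j) (by rw [hV]; have := Finset.mem_range.mp hj; omega)
  rw [hV] at hmul
  rw [div_mul_eq_mul_div, div_eq_iff (by exact_mod_cast Nat.card_pos.ne')]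
  exact_mod_cast (hmul.trans (mul_comm _ _)).symm

theorem stmt_1_general (F : Type*) [Field F] [Fintype F] (q r : ℕ)
    (hq : Fintype.card F = q) :
    Nat.card {M : Matrix (Fin r) (Fin r) F // M ^ r = 0} = q ^ (r ^ 2 - r) := by
  subst hq
  rcases r with _ | n
  · exact Nat.card_eq_one_iff_unique.mpr ⟨inferInstance, ⟨⟨0, Subsingleton.elim _ _⟩⟩⟩
  have hsum := sum_card_pow_eq_zero_div_card_GL F (n + 1)
  rw [Finset.sum_range_succ, sum_card_pow_eq_zero_div_card_GL F n, Matrix.card_GL_fin_succ]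
    at hsum
  have hg : (Nat.card (GL (Fin n) F) : ℚ) ≠ 0 := by exact_mod_cast Nat.card_pos.ne'
  have hq_gt : (1 : ℚ) < Fintype.card F := by exact_mod_cast Fintype.one_lt_card
  have hq1 : (Fintype.card F : ℚ) ^ (n + 1) - 1 ≠ 0 :=
    (sub_pos.mpr (one_lt_pow₀ hq_gt n.succ_ne_zero)).ne'
  push_cast [Nat.cast_sub (Nat.one_le_pow _ _ Fintype.card_pos)] at hsum
  field_simp at hsum
  rw [show (n + 1) ^ 2 - (n + 1) = n * n + n by rw [Nat.sub_eq_iff_eq_add (by nlinarith)]; ring]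
  qify
  linear_combination hsum

/-- (Fine–Herstein) The number of nilpotent `r × r` matrices over the finite field with `q`
elements equals `q^(r² - r)`.  (A matrix `N` is nilpotent iff `N^r = 0`.) -/
theorem stmt_1 (F : Type*) [Field F] [Fintype F] [DecidableEq F] (q r : ℕ)
    (hq : Fintype.card F = q) :
    Nat.card {M : Matrix (Fin r) (Fin r) F // M ^ r = 0} = q ^ (r ^ 2 - r) :=
  stmt_1_general F q r hq
end

section
/- Fix k ≥ 1 and a sorted pair (m,a). The set of attacking pairs D = {(i,j) : i<j, m_j − m_i − 1 + k + δ(a_i>a_j) ≥ 0} satisfies the Dyck-path property: for each j, the set {i < j : (i,j) ∈ D} is an interval {c_j, c_j+1, …, j−1} for some c_j, and c_j is weakly increasing in j. -/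
/-- For `k ≥ 1` and a sorted pair `(m,a)`, the set of attacking pairs
`D = {(i,j) : i < j, m_j - m_i - 1 + k + δ(a_i>a_j) ≥ 0}` has the Dyck-path property:
there is a weakly increasing function `c` with `c j ≤ j` such that for `i < j`,
`(i,j) ∈ D` iff `c j ≤ i`; i.e. for each `j` the set `{i < j : (i,j) ∈ D}` is the
interval `{c j, …, j-1}` and `c` is weakly increasing in `j`. -/
theorem stmt_10 (n : ℕ) (k : ℤ) (hk : 1 ≤ k) (m a : Fin n → ℕ) (ha : ∀ i, 1 ≤ a i)
    (hsort : ∀ i j : Fin n, i < j → m j ≤ m i ∧ (m i = m j → a i ≤ a j)) :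
    ∃ c : Fin n → ℕ, (∀ j : Fin n, c j ≤ (j : ℕ)) ∧ Monotone c ∧
      ∀ i j : Fin n, i < j →
        ((0 ≤ (m j : ℤ) - (m i : ℤ) - 1 + k + (if a i > a j then 1 else 0)) ↔
          c j ≤ (i : ℕ)) := by
  set A : Fin n → Fin n → Prop := fun i j =>
    0 ≤ (m j : ℤ) - (m i : ℤ) - 1 + k + (if a i > a j then 1 else 0) with hA
  have L1 : ∀ i i' j : Fin n, i ≤ i' → i' < j → A i j → A i' j := by
    intro i i' j hii hj hAij
    rcases eq_or_lt_of_le hii with h | h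
    · rwa [← h]
    · obtain ⟨hm, hma⟩ := hsort i i' h
      simp only [hA] at hAij ⊢
      rcases lt_or_eq_of_le hm with hmlt | hmeq
      · split_ifs at hAij ⊢ <;> omega
      · have haa := hma hmeq.symm
        split_ifs at hAij ⊢ <;> omega
  have L2 : ∀ (i j j' : Fin n), i < j → j ≤ j' → A i j' → A i j := by
    intro i j j' hij hjj hAij
    rcases eq_or_lt_of_le hjj with h | h
    · rwa [h]
    · obtain ⟨hm, hma⟩ := hsort j j' h
      simp only [hA] at hAij ⊢
      rcases lt_or_eq_of_le hm with hmlt | hmeq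
      · split_ifs at hAij ⊢ <;> omega
      · have haa := hma hmeq.symm
        split_ifs at hAij ⊢ <;> omega
  set S : Fin n → Set ℕ := fun j => {i : ℕ | (j : ℕ) ≤ i ∨ ∃ hi : i < n, A ⟨i, hi⟩ j}
    with hS
  have hmem : ∀ j : Fin n, (j : ℕ) ∈ S j := fun j => Or.inl le_rfl
  refine ⟨fun j => sInf (S j), fun j => Nat.sInf_le (hmem j), ?_, ?_⟩
  · intro j j' hjj
    have hspec := Nat.sInf_mem ⟨(j' : ℕ), hmem j'⟩
    rcases hspec with h | ⟨hi, hAi⟩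
    · exact le_trans (Nat.sInf_le (hmem j))
        (le_trans (Fin.le_def.mp hjj) h)
    · by_cases hc : (j : ℕ) ≤ sInf (S j')
      · exact le_trans (Nat.sInf_le (hmem j)) hc
      · push_neg at hc
        have hlt : (⟨sInf (S j'), hi⟩ : Fin n) < j := Fin.lt_def.mpr hc
        exact Nat.sInf_le (Or.inr ⟨hi, L2 _ j j' hlt hjj hAi⟩)
  · intro i j hij
    constructor
    · intro h
      exact Nat.sInf_le (Or.inr ⟨i.isLt, by simpa [hA] using h⟩)
    · intro hci
      have hci' : sInf (S j) ≤ (i : ℕ) := hci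
      have hspec := Nat.sInf_mem ⟨(j : ℕ), hmem j⟩
      rcases hspec with h | ⟨hi, hAi⟩
      · have := Fin.lt_def.mp hij; omega
        
      · have hle : (⟨sInf (S j), hi⟩ : Fin n) ≤ i := Fin.le_def.mpr hci'
        simpa [hA] using L1 _ i j hle hij hAi
end

section
/- Fix k ≥ 1. The set of quadruples (l, m, a) with m ∈ Z_{≥0}^n, a ∈ Z_{≥1}^n, 0 ≤ l ≤ n, satisfying simultaneously: (1A) l > 0; (2A) condition PF_{k,1} holds for ρ(m,a) if l < n; (1B) l < n; (2B) condition NPF_{k,n−1} holds for ρ^{-1}(m,a) if l > 0; (3B) m₁ > 0 — is empty. -/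
namespace Stmt14

/-- `PF_{k,i}` (parking function at `i`, 0-indexed: compares positions `i` and `i+1`):
`m_{i+1} ≤ m_i + k - 1`, or `m_{i+1} = m_i + k` and `a_{i+1} > a_i`. -/
def PF (k : ℕ) (m a : ℕ → ℕ) (i : ℕ) : Prop :=
  m (i + 1) + 1 ≤ m i + k ∨ (m (i + 1) = m i + k ∧ a i < a (i + 1))

/-- `NPF_{k,i}`, the negation of `PF_{k,i}`:
`m_{i+1} > m_i + k`, or `m_{i+1} = m_i + k` and `a_{i+1} ≤ a_i`. -/
def NPF (k : ℕ) (m a : ℕ → ℕ) (i : ℕ) : Prop :=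
  m i + k < m (i + 1) ∨ (m (i + 1) = m i + k ∧ a (i + 1) ≤ a i)

/-- The rotation `ρ(m,a)`, on sequences of length `n` (0-indexed):
`ρ(m)_0 = m_{n-1} + 1`, `ρ(m)_i = m_{i-1}`; `ρ(a)_0 = a_{n-1}`, `ρ(a)_i = a_{i-1}`. -/
def rotm (n : ℕ) (m : ℕ → ℕ) : ℕ → ℕ := fun i => if i = 0 then m (n - 1) + 1 else m (i - 1)

def rota (n : ℕ) (a : ℕ → ℕ) : ℕ → ℕ := fun i => if i = 0 then a (n - 1) else a (i - 1)

/-- The inverse rotation `ρ⁻¹(m,a)`: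
`ρ⁻¹(m)_{n-1} = m_0 - 1`, `ρ⁻¹(m)_i = m_{i+1}`; similarly for `a` without the `-1`. -/
def irotm (n : ℕ) (m : ℕ → ℕ) : ℕ → ℕ := fun i => if i = n - 1 then m 0 - 1 else m (i + 1)

def irota (n : ℕ) (a : ℕ → ℕ) : ℕ → ℕ := fun i => if i = n - 1 then a 0 else a (i + 1)

theorem NPF_iff_not_PF {k : ℕ} {m a : ℕ → ℕ} {i : ℕ} : NPF k m a i ↔ ¬ PF k m a i := by
  unfold NPF PF
  omega

/- Both conditions compare the entries `m_{n-1}` and `m_0` (with `a_{n-1}` and `a_0`): `ρ` raises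
the first by one, `ρ⁻¹` lowers the second by one, and for `m_0 > 0` the two shifts cancel. -/
theorem PF_irotm_iff_PF_rotm {n k : ℕ} {m a : ℕ → ℕ} (hn : 2 ≤ n) (hm : 0 < m 0) :
    PF k (irotm n m) (irota n a) (n - 2) ↔ PF k (rotm n m) (rota n a) 0 := by
  have hlast : n - 2 + 1 = n - 1 := by omega
  have hne : n - 2 ≠ n - 1 := by omega
  simp only [PF, irotm, irota, rotm, rota, hlast, hne, if_true, if_false, zero_add,
    one_ne_zero, Nat.sub_self]
  omega

theorem stmt_14_general (n k : ℕ) (l : ℕ) (m a : ℕ → ℕ)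
    (h1A : 0 < l)
    (h2A : l < n → PF k (rotm n m) (rota n a) 0)
    (h1B : l < n)
    (h2B : 0 < l → NPF k (irotm n m) (irota n a) (n - 2))
    (h3B : 0 < m 0) :
    False :=
  NPF_iff_not_PF.1 (h2B h1A) ((PF_irotm_iff_PF_rotm (by omega) h3B).2 (h2A h1B))

/-- The set of triples `(l, m, a)` with `0 ≤ l ≤ n` satisfying simultaneously
(1A) `l > 0`; (2A) `PF_{k,1}` for `ρ(m,a)` if `l < n`; (1B) `l < n`;
(2B) `NPF_{k,n-1}` for `ρ⁻¹(m,a)` if `l > 0`; (3B) `m₁ > 0` — is empty. -/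
theorem stmt_14 (n k : ℕ) (hn : 1 ≤ n) (hk : 1 ≤ k) (l : ℕ) (hl : l ≤ n) (m a : ℕ → ℕ)
    (h1A : 0 < l)
    (h2A : l < n → PF k (rotm n m) (rota n a) 0)
    (h1B : l < n)
    (h2B : 0 < l → NPF k (irotm n m) (irota n a) (n - 2))
    (h3B : 0 < m 0) :
    False :=
  stmt_14_general n k l m a h1A h2A h1B h2B h3B

end Stmt14
end

section
/- For k ≥ 1 and sorted triple (m,a,b) with multiplicities μ₁,…,μ_l, the number of nilpotent endomorphisms θ of the parabolic bundle O(m;a,b) over F_q vanishing at k fixed points s₁,…,s_k ∈ P¹(F_q)∖{0,∞} equals q^{Σ_{i<j} max(1−k+m_i−m_j−δ(a_j<a_i)−δ(b_j<b_i), 0)}. -/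
/-!
An entry `θ i j` with `m i ≤ m j` has degree `≤ 0`, so vanishing at a single `s l` kills it.
Since `m` is antitone, `θ` is strictly upper triangular, hence nilpotent for free. The count
factors over the entries `i < j`: such an entry ranges over the polynomials of degree
`≤ m i - m j - δ(b j < b i)` divisible by `∏ₗ (X - s l)` and, when `a j < a i`, also by `X`,
and the multiples of a degree-`d` polynomial in the polynomials of degree `< N` form an
`F`-space of dimension `N - d`.
-/

namespace Stmt18

/-- The space `Hom(O(m_j;a_j,b_j), O(m_i;a_i,b_i))` of homomorphisms of parabolic line
bundles on `ℙ¹` with marked points `0, ∞`, realized concretely: polynomials `p` with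
`deg p ≤ m_i - m_j - δ(b_j<b_i)` and `p(0) = 0` whenever `a_j < a_i`. -/
def HomCond {F : Type*} [Field F] {n : ℕ} (m a b : Fin n → ℕ) (i j : Fin n)
    (p : Polynomial F) : Prop :=
  p = 0 ∨ ((a j < a i → p.coeff 0 = 0) ∧
    (p.natDegree : ℤ) ≤ (m i : ℤ) - (m j : ℤ) - (if b j < b i then 1 else 0))

/-- An endomorphism of the parabolic bundle `O(m;a,b) = ⊕ᵢ O(mᵢ;aᵢ,bᵢ)`. -/
def IsEnd {F : Type*} [Field F] {n : ℕ} (m a b : Fin n → ℕ)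
    (f : Matrix (Fin n) (Fin n) (Polynomial F)) : Prop :=
  ∀ i j, HomCond m a b i j (f i j)

open Polynomial Finset

section Polynomials

variable {F : Type*} [Field F]

theorem prod_X_sub_C_dvd_iff_forall_isRoot (T : Finset F) (p : F[X]) :
    (∏ x ∈ T, (X - C x)) ∣ p ↔ ∀ x ∈ T, p.IsRoot x := by
  rcases eq_or_ne p 0 with rfl | hp
  · simp
  rw [prod_eq_multiset_prod, Multiset.prod_X_sub_C_dvd_iff_le_roots hp,
    Multiset.le_iff_subset T.nodup]
  exact ⟨fun h x hx => (mem_roots hp).1 (h hx), fun h x hx => (mem_roots hp).2 (h x hx)⟩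

theorem mul_mem_degreeLT_iff {M : F[X]} (hM : M ≠ 0) (g : F[X]) (N : ℕ) :
    M * g ∈ degreeLT F N ↔ g ∈ degreeLT F (N - M.natDegree) := by
  rcases eq_or_ne g 0 with rfl | hg
  · simp only [mul_zero, Submodule.zero_mem]
  rw [mem_degreeLT, mem_degreeLT, ← natDegree_lt_iff_degree_lt (mul_ne_zero hM hg),
    ← natDegree_lt_iff_degree_lt hg, natDegree_mul hM hg]
  omega

theorem card_degreeLT [Fintype F] (N : ℕ) : Nat.card (degreeLT F N) = Fintype.card F ^ N := by
  rw [Nat.card_congr (degreeLTEquiv F N).toEquiv, Nat.card_eq_fintype_card, Fintype.card_fun,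
    Fintype.card_fin]

theorem card_dvd_mem_degreeLT [Fintype F] {M : F[X]} (hM : M ≠ 0) (N : ℕ) :
    Nat.card {p : F[X] // p ∈ degreeLT F N ∧ M ∣ p} = Fintype.card F ^ (N - M.natDegree) := by
  let e : degreeLT F (N - M.natDegree) ≃ {p : F[X] // p ∈ degreeLT F N ∧ M ∣ p} :=
    Equiv.ofBijective (fun g => ⟨M * g, (mul_mem_degreeLT_iff hM g N).2 g.2, dvd_mul_right M g⟩)
      ⟨fun g₁ g₂ h => Subtype.ext (mul_left_cancel₀ hM (congrArg Subtype.val h)),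
        fun ⟨_, hp, g, hg⟩ => ⟨⟨g, (mul_mem_degreeLT_iff hM g N).1 (hg ▸ hp)⟩,
          Subtype.ext hg.symm⟩⟩
  rw [← Nat.card_congr e, card_degreeLT]

theorem card_degreeLT_forall_isRoot [Fintype F] (T : Finset F) (N : ℕ) :
    Nat.card {p : F[X] // p ∈ degreeLT F N ∧ ∀ x ∈ T, p.IsRoot x} =
      Fintype.card F ^ (N - #T) := by
  have hmonic : ∀ x ∈ T, (X - C x).Monic := fun x _ => monic_X_sub_C x
  have hdeg : (∏ x ∈ T, (X - C x)).natDegree = #T := by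
    simp [natDegree_prod_of_monic T _ hmonic]
  simp_rw [← prod_X_sub_C_dvd_iff_forall_isRoot, ← hdeg]
  exact card_dvd_mem_degreeLT (monic_prod_of_monic T _ hmonic).ne_zero N

end Polynomials

theorem isNilpotent_of_forall_not_lt {R ι : Type*} [CommRing R] [Fintype ι] [DecidableEq ι]
    [LinearOrder ι] (θ : Matrix ι ι R) (h : ∀ i j, ¬ i < j → θ i j = 0) : IsNilpotent θ := by
  refine ⟨Fintype.card ι, ?_⟩
  have hχ := Matrix.aeval_self_charpoly θ
  rwa [Matrix.charpoly_of_isUpperTriangular θ fun i j hji => h i j hji.not_gt,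
    Finset.prod_congr rfl fun i _ => by rw [h i i (lt_irrefl i), map_zero, sub_zero],
    prod_const, card_univ, map_pow, aeval_X] at hχ

theorem card_matrix_forall {R ι κ : Type*} [Fintype ι] [Fintype κ]
    (P : ι → κ → R → Prop) :
    Nat.card {θ : Matrix ι κ R // ∀ i j, P i j (θ i j)} = ∏ i, ∏ j, Nat.card {x // P i j x} := by
  let e : {θ : Matrix ι κ R // ∀ i j, P i j (θ i j)} ≃ ∀ i j, {x // P i j x} :=
    Equiv.subtypePiEquivPi.trans (Equiv.piCongrRight fun _ => Equiv.subtypePiEquivPi)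
  simp only [Nat.card_congr e, Nat.card_pi]

section ParabolicBundle

variable {F : Type*} [Field F] {n : ℕ} (m a b : Fin n → ℕ)

def vanishingHomDim (k : ℕ) (i j : Fin n) : ℕ :=
  (max (1 - (k : ℤ) + (m i : ℤ) - (m j : ℤ) - (if a j < a i then 1 else 0)
    - (if b j < b i then 1 else 0)) 0).toNat

theorem vanishingHomDim_eq_zero {k : ℕ} (hk : 1 ≤ k) {i j : Fin n} (h : m i ≤ m j) :
    vanishingHomDim m a b k i j = 0 := by
  unfold vanishingHomDim
  split_ifs <;> omega

theorem homCond_iff_mem_degreeLT {i j : Fin n} (p : F[X]) :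
    HomCond m a b i j p ↔
      p ∈ degreeLT F ((m i : ℤ) - m j - (if b j < b i then 1 else 0) + 1).toNat ∧
        (a j < a i → p.IsRoot 0) := by
  rcases eq_or_ne p 0 with rfl | hp
  · simp [HomCond]
  rw [HomCond, mem_degreeLT, ← natDegree_lt_iff_degree_lt hp, IsRoot.def,
    ← coeff_zero_eq_eval_zero, Int.lt_toNat]
  simp only [hp, false_or]
  rw [Int.lt_add_one_iff, and_comm]

theorem HomCond.eq_zero {i j : Fin n} {p : F[X]} (h : HomCond m a b i j p) (hm : m i ≤ m j)
    {x : F} (hx : p.IsRoot x) : p = 0 := by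
  rcases h with h | ⟨-, hdeg⟩
  · exact h
  have hp : p = C (p.coeff 0) := eq_C_of_natDegree_eq_zero (by split_ifs at hdeg <;> omega)
  rw [hp, IsRoot.def, eval_C] at hx
  rw [hp, hx, map_zero]

theorem card_homCond_forall_eval_eq_zero [Fintype F] {k : ℕ} {s : Fin k → F}
    (hs : Function.Injective s) (hs0 : ∀ l, s l ≠ 0) (i j : Fin n) :
    Nat.card {p : F[X] // HomCond m a b i j p ∧ ∀ l, eval (s l) p = 0} =
      Fintype.card F ^ vanishingHomDim m a b k i j := by
  classical
  set T : Finset F := if a j < a i then insert 0 (univ.image s) else univ.image s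
  have hT : #T = k + if a j < a i then 1 else 0 := by
    have h0 : (0 : F) ∉ univ.image s := by simpa using hs0
    split_ifs <;> simp [T, card_insert_of_notMem h0, card_image_of_injective _ hs, *]
  have hiff : ∀ p : F[X], (HomCond m a b i j p ∧ ∀ l, eval (s l) p = 0) ↔
      p ∈ degreeLT F ((m i : ℤ) - m j - (if b j < b i then 1 else 0) + 1).toNat ∧
        ∀ x ∈ T, p.IsRoot x := by
    intro p
    rw [homCond_iff_mem_degreeLT]
    simp only [T]
    split_ifs <;> simp [IsRoot.def, and_assoc, *]
  rw [Nat.card_congr (Equiv.subtypeEquivRight hiff), card_degreeLT_forall_isRoot, hT]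
  unfold vanishingHomDim
  congr 1
  split_ifs <;> omega

theorem isEnd_isNilpotent_forall_map_eval_iff {k : ℕ} (hk : 1 ≤ k)
    (hm : Antitone m) (s : Fin k → F) (θ : Matrix (Fin n) (Fin n) F[X]) :
    (IsEnd m a b θ ∧ IsNilpotent θ ∧ ∀ l, θ.map (eval (s l)) = 0) ↔
      ∀ i j, HomCond m a b i j (θ i j) ∧ ∀ l, eval (s l) (θ i j) = 0 := by
  have hmap : (∀ l, θ.map (eval (s l)) = 0) ↔ ∀ i j l, eval (s l) (θ i j) = 0 := by
    simp only [← Matrix.ext_iff, Matrix.map_apply, Matrix.zero_apply]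
    exact ⟨fun h i j l => h l i j, fun h l i j => h i j l⟩
  refine ⟨fun ⟨hθ, _, hv⟩ i j => ⟨hθ i j, hmap.1 hv i j⟩, fun h => ⟨fun i j => (h i j).1, ?_,
    hmap.2 fun i j => (h i j).2⟩⟩
  exact isNilpotent_of_forall_not_lt θ fun i j hij =>
    (h i j).1.eq_zero m a b (hm (not_lt.1 hij)) ((h i j).2 ⟨0, hk⟩)

end ParabolicBundle

theorem stmt_18_general (F : Type*) [Field F] [Fintype F] (q : ℕ) (hq : Fintype.card F = q)
    (k : ℕ) (hk : 1 ≤ k) (s : Fin k → F) (hs : Function.Injective s) (hs0 : ∀ l, s l ≠ 0)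
    (n : ℕ) (m a b : Fin n → ℕ)
    (hsort : ∀ i j : Fin n, i < j →
      m j ≤ m i ∧ (m i = m j → a i ≤ a j) ∧ (m i = m j → a i = a j → b i ≤ b j)) :
    Nat.card {θ : Matrix (Fin n) (Fin n) (Polynomial F) //
        IsEnd m a b θ ∧ IsNilpotent θ ∧ ∀ l, θ.map (Polynomial.eval (s l)) = 0} =
      q ^ (∑ p ∈ Finset.univ.filter (fun p : Fin n × Fin n => p.1 < p.2),
        (max (1 - (k : ℤ) + (m p.1 : ℤ) - (m p.2 : ℤ) - (if a p.2 < a p.1 then 1 else 0)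
          - (if b p.2 < b p.1 then 1 else 0)) 0).toNat) := by
  have hm : Antitone m := antitone_iff_forall_lt.2 fun i j h => (hsort i j h).1
  rw [Nat.card_congr <| Equiv.subtypeEquivRight <|
      isEnd_isNilpotent_forall_map_eval_iff m a b hk hm s,
    card_matrix_forall fun i j p => HomCond m a b i j p ∧ ∀ l, eval (s l) p = 0]
  simp only [card_homCond_forall_eval_eq_zero m a b hs hs0, hq]
  change _ = q ^ ∑ p ∈ univ.filter (fun p : Fin n × Fin n => p.1 < p.2),
    vanishingHomDim m a b k p.1 p.2
  rw [sum_filter_of_ne fun p _ hp => by_contra fun hlt =>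
    hp (vanishingHomDim_eq_zero m a b hk (hm (not_lt.1 hlt))), ← Fintype.prod_prod_type',
    prod_pow_eq_pow_sum]

/-- For `k ≥ 1`, a sorted triple `(m,a,b)` and `k` distinct points `s₁,…,s_k` of
`ℙ¹(F_q) ∖ {0,∞}`, the number of nilpotent endomorphisms of the parabolic bundle `O(m;a,b)`
vanishing at every `s_l` equals
`q^{Σ_{i<j} max(1-k+m_i-m_j-δ(a_j<a_i)-δ(b_j<b_i), 0)}`. -/
theorem stmt_18 (F : Type*) [Field F] [Fintype F] (q : ℕ) (hq : Fintype.card F = q)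
    (k : ℕ) (hk : 1 ≤ k) (s : Fin k → F) (hs : Function.Injective s) (hs0 : ∀ l, s l ≠ 0)
    (n : ℕ) (m a b : Fin n → ℕ) (ha : ∀ i, 1 ≤ a i) (hb : ∀ i, 1 ≤ b i)
    (hsort : ∀ i j : Fin n, i < j →
      m j ≤ m i ∧ (m i = m j → a i ≤ a j) ∧ (m i = m j → a i = a j → b i ≤ b j)) :
    Nat.card {θ : Matrix (Fin n) (Fin n) (Polynomial F) //
        IsEnd m a b θ ∧ IsNilpotent θ ∧ ∀ l, θ.map (Polynomial.eval (s l)) = 0} =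
      q ^ (∑ p ∈ Finset.univ.filter (fun p : Fin n × Fin n => p.1 < p.2),
        (max (1 - (k : ℤ) + (m p.1 : ℤ) - (m p.2 : ℤ) - (if a p.2 < a p.1 then 1 else 0)
          - (if b p.2 < b p.1 then 1 else 0)) 0).toNat) :=
  stmt_18_general F q hq k hk s hs hs0 n m a b hsort

end Stmt18
end
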